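/- For every n ≥ 0, the matrix A'_n = U_n A_n V_n is lower anti-triangular: for all subsets I, J ⊆ [n] with r_n(I) + r_n(J) ≤ 2^n, the entry A'_n(I, J) equals 0. -/

import Mathlib

/-! Splitting rows and columns according to whether `n + 1` belongs to the index set, `U_{n+1}`
and `V_{n+1}` have the block forms `[[U_n, 0], [U_n, U_n]]` and `[[V_n, 0], [-V_n, V_n]]`.
Combined with the block recursion of `A` and `B` this gives
`A'_{n+1} = [[0, A'_n], [A'_n + B'_n, A'_n - B'_n]]` and
`B'_{n+1} = [[0, A'_n], [B'_n, A'_n - B'_n]]` for `B'_n = U_n B_n V_n`. The zero upper-left block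
and the anti-triangular anti-diagonal blocks make both `A'_{n+1}` and `B'_{n+1}` lower
anti-triangular, by induction on `n`. -/

open Finset Polynomial
open scoped Classical

namespace AR

/-- `binVal I = r_n(I) - 1 = Σ_{i ∈ I} 2^(i-1)`. -/
def binVal (I : Finset ℕ) : ℕ := ∑ i ∈ I, 2 ^ (i - 1)

lemma binVal_Icc (m : ℕ) : binVal (Finset.Icc 1 m) = 2 ^ m - 1 := by
  induction m with
  | zero => simp [binVal]
  | succ k ih =>
      rw [binVal, Finset.sum_Icc_succ_top (by omega)]
      rw [binVal] at ih
      rw [ih]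
      have h1 : 1 ≤ 2 ^ k := Nat.one_le_two_pow
      simp only [Nat.add_sub_cancel, pow_succ]
      omega

lemma binVal_lt {n : ℕ} {I : Finset ℕ} (h : I ⊆ Finset.Icc 1 n) : binVal I < 2 ^ n := by
  have h1 : binVal I ≤ binVal (Finset.Icc 1 n) :=
    Finset.sum_le_sum_of_subset h
  have h2 := binVal_Icc n
  have h3 : 1 ≤ 2 ^ n := Nat.one_le_two_pow
  omega

/-- The row/column index (zero-based, i.e. `r_n(I) - 1`) corresponding to a subset `I ⊆ [n]`. -/
def idx (n : ℕ) (I : Finset ℕ) (h : I ⊆ Finset.Icc 1 n) : Fin (2 ^ n) :=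
  ⟨binVal I, binVal_lt h⟩

def blockEquiv (n : ℕ) : Fin (2 ^ n) ⊕ Fin (2 ^ n) ≃ Fin (2 ^ (n + 1)) :=
  finSumFinEquiv.trans (finCongr (by rw [pow_succ, mul_two]))

/-- The pair of Adin–Roichman matrices `(A_n, B_n)`, defined recursively. -/
def ABpair : (n : ℕ) → Matrix (Fin (2 ^ n)) (Fin (2 ^ n)) ℤ × Matrix (Fin (2 ^ n)) (Fin (2 ^ n)) ℤ
  | 0 => (Matrix.of fun _ _ => 1, Matrix.of fun _ _ => 1)
  | n + 1 =>
      let p := ABpair n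
      ((Matrix.reindex (blockEquiv n) (blockEquiv n)) (Matrix.fromBlocks p.1 p.1 p.1 (-p.2)),
       (Matrix.reindex (blockEquiv n) (blockEquiv n)) (Matrix.fromBlocks p.1 p.1 0 (-p.2)))

def A (n : ℕ) : Matrix (Fin (2 ^ n)) (Fin (2 ^ n)) ℤ := (ABpair n).1

def B (n : ℕ) : Matrix (Fin (2 ^ n)) (Fin (2 ^ n)) ℤ := (ABpair n).2

/-- `R` is a (nonempty) integer interval. -/
def IsInterval (R : Finset ℕ) : Prop := ∃ a b : ℕ, R = Finset.Icc a b

/-- `R` is a run of `I`: a maximal nonempty interval contained in `I`. -/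
def IsRun (I R : Finset ℕ) : Prop :=
  R.Nonempty ∧ IsInterval R ∧ R ⊆ I ∧
    ∀ S : Finset ℕ, IsInterval S → S ⊆ I → R ⊆ S → S = R

/-- `R` is a prefix of `S` : `min R = min S` and `R ⊆ S`. -/
def IsPrefixOf (R S : Finset ℕ) : Prop := R.min = S.min ∧ R ⊆ S

/-- `I ≫ J` : every run of `I ∩ J` is a prefix of a run of `I`. -/
def Gg (I J : Finset ℕ) : Prop :=
  ∀ R : Finset ℕ, IsRun (I ∩ J) R → ∃ S : Finset ℕ, IsRun I S ∧ IsPrefixOf R S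

/-- The set of runs of `I`. -/
noncomputable def runs (I : Finset ℕ) : Finset (Finset ℕ) :=
  I.powerset.filter (fun R => IsRun I R)

/-- `π(I)`: the product of (size + 1) over the runs of `I`. -/
noncomputable def piFun (I : Finset ℕ) : ℕ := ∏ R ∈ runs I, (R.card + 1)

/-- `π'_n(I)`: the product of (size + 1) over the runs of `I` not containing `n`. -/
noncomputable def piFun' (n : ℕ) (I : Finset ℕ) : ℕ :=
  ∏ R ∈ (runs I).filter (fun R => n ∉ R), (R.card + 1)

/-- The subset of `[n]` encoded by a zero-based index `i : Fin (2^n)` (binary digits). -/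
def decode (n : ℕ) (i : Fin (2 ^ n)) : Finset ℕ :=
  (Finset.Icc 1 n).filter (fun k => Nat.testBit i.val (k - 1))

/-- The matrix `U_n`, with `U_n(I,J) = 1` if `I ⊇ J` and `0` otherwise. -/
def U (n : ℕ) : Matrix (Fin (2 ^ n)) (Fin (2 ^ n)) ℤ :=
  Matrix.of fun i j => if decode n j ⊆ decode n i then 1 else 0

/-- The matrix `V_n = U_n⁻¹`, with `V_n(I,J) = (-1)^{|I \ J|}` if `I ⊇ J` and `0` otherwise. -/
def V (n : ℕ) : Matrix (Fin (2 ^ n)) (Fin (2 ^ n)) ℤ :=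
  Matrix.of fun i j =>
    if decode n j ⊆ decode n i then (-1) ^ ((decode n i) \ (decode n j)).card else 0

def A' (n : ℕ) : Matrix (Fin (2 ^ n)) (Fin (2 ^ n)) ℤ := U n * A n * V n

def B' (n : ℕ) : Matrix (Fin (2 ^ n)) (Fin (2 ^ n)) ℤ := U n * B n * V n

/-- `E ⪯ I` : `E ⊆ I`, `E` contains no minimal element of a run of `I`,
and `E` contains no two consecutive integers. -/
def SubPrec (E I : Finset ℕ) : Prop :=
  E ⊆ I ∧ (∀ R : Finset ℕ, (h : IsRun I R) → R.min' h.1 ∉ E) ∧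
    ∀ i : ℕ, ¬ (i ∈ E ∧ i + 1 ∈ E)

/-- `I ⇝ J` : `J = ([n] \ I) ∪ E` for some `E ⪯ I`. -/
def Step (n : ℕ) (I J : Finset ℕ) : Prop :=
  ∃ E : Finset ℕ, SubPrec E I ∧ J = (Finset.Icc 1 n \ I) ∪ E

/-- `π_μ` for a composition `μ` of `n`. -/
def piComp {n : ℕ} (μ : Composition n) : ℕ := (μ.blocks.map (· + 1)).prod

/-- `π'_μ` for a composition `μ` of `n`. -/
def piComp' {n : ℕ} (μ : Composition n) : ℕ := (μ.blocks.dropLast.map (· + 1)).prod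

/-- The Thue–Morse sequence: `thueMorse m = s₂(m) % 2`. -/
def thueMorse (m : ℕ) : ℕ := (Nat.digits 2 m).sum % 2

end AR

namespace Matrix

variable {R : Type*} {m : ℕ}

def IsLowerAntitriangular [Zero R] (M : Matrix (Fin m) (Fin m) R) : Prop :=
  ∀ i j : Fin m, (i : ℕ) + 1 + ((j : ℕ) + 1) ≤ m → M i j = 0

lemma IsLowerAntitriangular.add [AddZeroClass R] {M N : Matrix (Fin m) (Fin m) R}
    (hM : IsLowerAntitriangular M) (hN : IsLowerAntitriangular N) :
    IsLowerAntitriangular (M + N) := fun i j h => by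
  rw [add_apply, hM i j h, hN i j h, add_zero]

lemma reindex_mul_reindex {l m n l' m' n' α : Type*} [Fintype m] [Fintype m']
    [NonUnitalNonAssocSemiring α] (el : l ≃ l') (em : m ≃ m') (en : n ≃ n')
    (M : Matrix l m α) (N : Matrix m n α) :
    reindex el em M * reindex em en N = reindex el en (M * N) :=
  submatrix_mul_equiv M N _ em.symm _

lemma ext_of_equiv {ι κ : Type*} (e : ι ≃ κ) {M N : Matrix κ κ R}
    (h : ∀ a b, M (e a) (e b) = N (e a) (e b)) : M = N :=
  ext fun k l => by simpa using h (e.symm k) (e.symm l)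

end Matrix

namespace AR

@[simp]
lemma blockEquiv_inl_val (n : ℕ) (i : Fin (2 ^ n)) : (blockEquiv n (.inl i) : ℕ) = i := by
  simp [blockEquiv]

@[simp]
lemma blockEquiv_inr_val (n : ℕ) (i : Fin (2 ^ n)) :
    (blockEquiv n (.inr i) : ℕ) = 2 ^ n + i := by
  simp [blockEquiv, Nat.add_comm]

lemma isLowerAntitriangular_reindex_fromBlocks {R : Type*} [Zero R] (n : ℕ)
    {X Y Z : Matrix (Fin (2 ^ n)) (Fin (2 ^ n)) R}
    (hX : X.IsLowerAntitriangular) (hY : Y.IsLowerAntitriangular) :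
    (Matrix.reindex (blockEquiv n) (blockEquiv n)
      (Matrix.fromBlocks 0 X Y Z)).IsLowerAntitriangular := by
  intro k l hkl
  obtain ⟨a, rfl⟩ := (blockEquiv n).surjective k
  obtain ⟨b, rfl⟩ := (blockEquiv n).surjective l
  have hpow : 2 ^ (n + 1) = 2 ^ n + 2 ^ n := by rw [pow_succ, mul_two]
  rcases a with a | a <;> rcases b with b | b <;>
    simp only [blockEquiv_inl_val, blockEquiv_inr_val] at hkl <;>
    simp only [Matrix.reindex_apply, Matrix.submatrix_apply, Equiv.symm_apply_apply,
      Matrix.fromBlocks_apply₁₁, Matrix.fromBlocks_apply₁₂, Matrix.fromBlocks_apply₂₁,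
      Matrix.fromBlocks_apply₂₂, Matrix.zero_apply]
  · exact hX a b (by omega)
  · exact hY a b (by omega)
  · omega

lemma decode_blockEquiv_inl (n : ℕ) (i : Fin (2 ^ n)) :
    decode (n + 1) (blockEquiv n (.inl i)) = decode n i := by
  ext (_ | j)
  · simp [decode]
  · simp only [decode, Finset.mem_filter, Finset.mem_Icc, Nat.add_sub_cancel, blockEquiv_inl_val]
    rcases lt_or_ge j n with hj | hj
    · simp [hj, hj.le]
    · simp [Nat.testBit_lt_two_pow (i.isLt.trans_le (Nat.pow_le_pow_right two_pos hj))]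

lemma decode_blockEquiv_inr (n : ℕ) (i : Fin (2 ^ n)) :
    decode (n + 1) (blockEquiv n (.inr i)) = insert (n + 1) (decode n i) := by
  ext (_ | j)
  · simp [decode]
  · simp only [decode, Finset.mem_filter, Finset.mem_Icc, Nat.add_sub_cancel, blockEquiv_inr_val,
      Finset.mem_insert]
    rcases lt_trichotomy j n with hj | rfl | hj
    · simp [Nat.testBit_two_pow_add_gt hj, hj, hj.le, hj.ne]
    · simp [Nat.testBit_two_pow_add_eq, Nat.testBit_lt_two_pow i.isLt]
    · simp [hj.ne', hj.not_gt, (Nat.succ_lt_succ hj).not_ge]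

lemma succ_notMem_decode (n : ℕ) (i : Fin (2 ^ n)) : n + 1 ∉ decode n i := by
  simp [decode]

lemma U_succ (n : ℕ) : U (n + 1) =
    Matrix.reindex (blockEquiv n) (blockEquiv n) (Matrix.fromBlocks (U n) 0 (U n) (U n)) := by
  refine Matrix.ext_of_equiv (blockEquiv n) fun a b => ?_
  rcases a with a | a <;> rcases b with b | b <;>
    simp [U, decode_blockEquiv_inl, decode_blockEquiv_inr, Finset.insert_subset_iff,
      Finset.subset_insert_iff_of_notMem, succ_notMem_decode]

lemma V_succ (n : ℕ) : V (n + 1) =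
    Matrix.reindex (blockEquiv n) (blockEquiv n) (Matrix.fromBlocks (V n) 0 (-V n) (V n)) := by
  refine Matrix.ext_of_equiv (blockEquiv n) fun a b => ?_
  rcases a with a | a <;> rcases b with b | b <;>
    simp [V, decode_blockEquiv_inl, decode_blockEquiv_inr, Finset.insert_subset_iff,
      Finset.subset_insert_iff_of_notMem, succ_notMem_decode,
      Finset.insert_sdiff_of_notMem, Finset.card_insert_of_notMem, Finset.insert_sdiff_insert,
      Finset.sdiff_insert_of_notMem, pow_succ, neg_ite]

lemma A_succ (n : ℕ) : A (n + 1) = Matrix.reindex (blockEquiv n) (blockEquiv n)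
    (Matrix.fromBlocks (A n) (A n) (A n) (-B n)) := rfl

lemma B_succ (n : ℕ) : B (n + 1) = Matrix.reindex (blockEquiv n) (blockEquiv n)
    (Matrix.fromBlocks (A n) (A n) 0 (-B n)) := rfl

lemma U_mul_reindex_fromBlocks_mul_V (n : ℕ) (M N P Q : Matrix (Fin (2 ^ n)) (Fin (2 ^ n)) ℤ) :
    U (n + 1) * Matrix.reindex (blockEquiv n) (blockEquiv n) (Matrix.fromBlocks M N P Q) *
        V (n + 1) =
      Matrix.reindex (blockEquiv n) (blockEquiv n)
        (Matrix.fromBlocks (U n * (M - N) * V n) (U n * N * V n)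
          (U n * (M + P - (N + Q)) * V n) (U n * (N + Q) * V n)) := by
  rw [U_succ, V_succ, Matrix.reindex_mul_reindex, Matrix.reindex_mul_reindex,
    Matrix.fromBlocks_multiply, Matrix.fromBlocks_multiply]
  simp only [Matrix.mul_zero, Matrix.zero_mul, add_zero, zero_add, Matrix.mul_neg,
    ← Matrix.mul_add, ← sub_eq_add_neg, ← Matrix.mul_sub, ← Matrix.sub_mul]

lemma A'_succ (n : ℕ) : A' (n + 1) =
    Matrix.reindex (blockEquiv n) (blockEquiv n)
      (Matrix.fromBlocks 0 (A' n) (A' n + B' n) (A' n - B' n)) := by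
  rw [A', A_succ, U_mul_reindex_fromBlocks_mul_V]
  congr 1
  rw [Matrix.fromBlocks_inj]
  refine ⟨by simp, rfl, ?_, ?_⟩
  · rw [show A n + A n - (A n + -B n) = A n + B n by abel, Matrix.mul_add, Matrix.add_mul]
    rfl
  · rw [← sub_eq_add_neg, Matrix.mul_sub, Matrix.sub_mul]
    rfl

lemma B'_succ (n : ℕ) : B' (n + 1) =
    Matrix.reindex (blockEquiv n) (blockEquiv n)
      (Matrix.fromBlocks 0 (A' n) (B' n) (A' n - B' n)) := by
  rw [B', B_succ, U_mul_reindex_fromBlocks_mul_V]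
  congr 1
  rw [Matrix.fromBlocks_inj]
  refine ⟨by simp, rfl, ?_, ?_⟩
  · rw [show A n + 0 - (A n + -B n) = B n by abel]
    rfl
  · rw [← sub_eq_add_neg, Matrix.mul_sub, Matrix.sub_mul]
    rfl

lemma isLowerAntitriangular_A'_and_B' (n : ℕ) :
    (A' n).IsLowerAntitriangular ∧ (B' n).IsLowerAntitriangular := by
  induction n with
  | zero => exact ⟨fun i j h => by omega, fun i j h => by omega⟩
  | succ n ih =>
    rw [A'_succ, B'_succ]
    exact ⟨isLowerAntitriangular_reindex_fromBlocks n ih.1 (ih.1.add ih.2),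
      isLowerAntitriangular_reindex_fromBlocks n ih.1 ih.2⟩

theorem stmt10 (n : ℕ) (I J : Finset ℕ) (hI : I ⊆ Finset.Icc 1 n) (hJ : J ⊆ Finset.Icc 1 n)
    (h : (1 + binVal I) + (1 + binVal J) ≤ 2 ^ n) :
    A' n (idx n I hI) (idx n J hJ) = 0 :=
  (isLowerAntitriangular_A'_and_B' n).1 _ _ (by simp only [idx]; omega)

end AR
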